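/- Let R be an associative unital ℂ-algebra, q, p ∈ R with qp − pq = h·1 (h ∈ ℂ), p invertible, and a, b, c, d, t ∈ ℂ. Put H_VI = q³p² − (1+t)q²p² − (a+b+c)q²p + tqp² + (b+c+(a+b)t)qp − d(a+b+c+d−h)q − btp, and set x = bp − qp², y = p⁻¹. Then: (i) xy − yx = h·1; and (ii) with H₂(x,y) = −x³y⁴ + (−a+2b−c+6h)x²y³ − (1+t)x²y² + (−b²+b(2c+d−7h)+(c+d−3h)(d+2h)+a(2b+d+2h))xy² + (b−c+2h−(a−b−2h)t)xy − tx − b(a+c+d−2h)(b+d+h)y (normally ordered, x-powers to the left), one has [x, H_VI] = [x, H₂(x,y)] and [y, H_VI] = [y, H₂(x,y)]. Hence the quantum Painlevé VI system is transformed in the chart-2 coordinates into the polynomial Hamiltonian system with Hamiltonian H₂. -/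

import Mathlib

/-!
In `x^i y^j` every `y = p⁻¹` stands to the right of all `p` and `q`, so it only ever meets `p`
and cancels; normally ordering with `pq = qp - h` then shows that `H₂(x, y)` differs from
`H_VI` by the scalar `b(h - c + (h - a)t)`, which commutes with everything.
-/

section WeylRelation

variable {R : Type*} [Ring R] [Algebra ℂ R] {h : ℂ} {q p : R}

theorem mul_eq_sub_of_commutator (hcomm : q * p - p * q = h • (1 : R)) :
    p * q = q * p - h • (1 : R) := by
  rw [← hcomm, sub_sub_cancel]

theorem mul_mul_eq_sub_of_commutator (hcomm : q * p - p * q = h • (1 : R)) (X : R) :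
    p * (q * X) = q * (p * X) - h • X := by
  rw [← mul_assoc, mul_eq_sub_of_commutator hcomm, sub_mul, mul_assoc, smul_one_mul]

end WeylRelation

section PainleveVI

variable {R : Type*} [Ring R] [Algebra ℂ R]

theorem commutator_add_smul_one (x H : R) (s : ℂ) :
    x * (H + s • (1 : R)) - (H + s • (1 : R)) * x = x * H - H * x := by
  rw [mul_add, add_mul, mul_smul_one, smul_one_mul]
  abel

def painleveVIHamiltonian (h a b c d t : ℂ) (q p : R) : R :=
  q ^ 3 * p ^ 2 - (1 + t) • (q ^ 2 * p ^ 2)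
    - (a + b + c) • (q ^ 2 * p) + t • (q * p ^ 2)
    + (b + c + (a + b) * t) • (q * p)
    - (d * (a + b + c + d - h)) • q - (b * t) • p

def chart2Hamiltonian (h a b c d t : ℂ) (x y : R) : R :=
  -(x ^ 3 * y ^ 4) + (-a + 2 * b - c + 6 * h) • (x ^ 2 * y ^ 3)
    - (1 + t) • (x ^ 2 * y ^ 2)
    + (-b ^ 2 + b * (2 * c + d - 7 * h) + (c + d - 3 * h) * (d + 2 * h)
        + a * (2 * b + d + 2 * h)) • (x * y ^ 2)
    + (b - c + 2 * h - (a - b - 2 * h) * t) • (x * y)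
    - t • x - (b * (a + c + d - 2 * h) * (b + d + h)) • y

variable {h : ℂ} {q p : R} [Invertible p]

theorem chart2_commutator (hcomm : q * p - p * q = h • (1 : R)) (b : ℂ) :
    (b • p - q * p ^ 2) * ⅟p - ⅟p * (b • p - q * p ^ 2) = h • (1 : R) := by
  have hxy : (b • p - q * p ^ 2) * ⅟p = b • (1 : R) - q * p := by
    rw [sub_mul, smul_mul_assoc, mul_invOf_self, sq, ← mul_assoc, mul_invOf_cancel_right]
  have hyx : ⅟p * (b • p - q * p ^ 2) = b • (1 : R) - q * p - h • (1 : R) := by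
    conv_lhs => rw [mul_sub, mul_smul_comm, invOf_mul_self, sq, ← mul_assoc q,
      eq_add_of_sub_eq hcomm, add_mul, mul_add, smul_one_mul, mul_smul_comm, invOf_mul_self,
      mul_assoc p, invOf_mul_cancel_left]
    abel
  rw [hxy, hyx]
  abel

theorem chart2Hamiltonian_eq_add_smul_one (hcomm : q * p - p * q = h • (1 : R))
    (a b c d t : ℂ) :
    chart2Hamiltonian h a b c d t (b • p - q * p ^ 2) ⅟p
      = painleveVIHamiltonian h a b c d t q p + (b * (h - c + (h - a) * t)) • (1 : R) := by
  simp only [chart2Hamiltonian, painleveVIHamiltonian, pow_succ, pow_zero, one_mul, mul_one,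
    mul_add, add_mul, mul_sub, sub_mul, mul_assoc, smul_mul_assoc, mul_smul_comm, neg_mul,
    mul_mul_eq_sub_of_commutator hcomm, mul_invOf_cancel_left, mul_invOf_self, smul_sub,
    smul_smul, neg_sub]
  match_scalars <;> ring

end PainleveVI

/-- The Takano chart-2 transformation `x = bp - qp²`, `y = p⁻¹` for quantum
Painlevé VI is canonical, and it transforms the system into the polynomial
Hamiltonian system with Hamiltonian
`H₂ = -x³y⁴ + (-a+2b-c+6h)x²y³ - (1+t)x²y²
      + (-b²+b(2c+d-7h)+(c+d-3h)(d+2h)+a(2b+d+2h))xy²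
      + (b-c+2h-(a-b-2h)t)xy - tx - b(a+c+d-2h)(b+d+h)y`. -/
theorem quantum_PVI_chart2_hamiltonian
    {R : Type*} [Ring R] [Algebra ℂ R]
    (h a b c d t : ℂ) (q p : R) [Invertible p]
    (hcomm : q * p - p * q = h • (1 : R))
    (H x y H₂ : R)
    (hH : H = q ^ 3 * p ^ 2 - (1 + t) • (q ^ 2 * p ^ 2)
        - (a + b + c) • (q ^ 2 * p) + t • (q * p ^ 2)
        + (b + c + (a + b) * t) • (q * p)
        - (d * (a + b + c + d - h)) • q - (b * t) • p)
    (hx : x = b • p - q * p ^ 2) (hy : y = ⅟p)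
    (hH₂ : H₂ = -(x ^ 3 * y ^ 4) + (-a + 2 * b - c + 6 * h) • (x ^ 2 * y ^ 3)
        - (1 + t) • (x ^ 2 * y ^ 2)
        + (-b ^ 2 + b * (2 * c + d - 7 * h) + (c + d - 3 * h) * (d + 2 * h)
            + a * (2 * b + d + 2 * h)) • (x * y ^ 2)
        + (b - c + 2 * h - (a - b - 2 * h) * t) • (x * y)
        - t • x - (b * (a + c + d - 2 * h) * (b + d + h)) • y) :
    x * y - y * x = h • (1 : R) ∧
    x * H - H * x = x * H₂ - H₂ * x ∧
    y * H - H * y = y * H₂ - H₂ * y := by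
  obtain rfl : H₂ = chart2Hamiltonian h a b c d t x y := hH₂
  obtain rfl : H = painleveVIHamiltonian h a b c d t q p := hH
  subst hx hy
  rw [chart2Hamiltonian_eq_add_smul_one hcomm, commutator_add_smul_one,
    commutator_add_smul_one]
  exact ⟨chart2_commutator hcomm b, rfl, rfl⟩
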